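/- arXiv:2202.05235 — 4 statements merged into one kernel-verified Lean document; each statement's English description precedes it below -/
import Mathlib

section
/- Let n ≥ 2, r ≥ 3, 1 ≤ k ≤ n−1 and S_1, S_r > 0 with S_1^r < n^{r−1} S_r. Define g(α) = k(1+α(n/k−1))^r + (n−k)(1−α)^r − n^r S_r / S_1^r and ñ by ñ^{r−1} = S_1^r / S_r, assuming 1 ≤ ñ ≤ n. Then g has a root in (−k/(n−k), 0) if and only if k > n − ñ, and g has a root in (0,1) if and only if k < ñ. -/
lemma pow_convex_combo (r : ℕ) (x y a b : ℝ) (hx : 0 ≤ x) (hy : 0 ≤ y)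
    (ha : 0 ≤ a) (hb : 0 ≤ b) (hab : a + b = 1) :
    (a * x + b * y) ^ r ≤ a * x ^ r + b * y ^ r := by
  have h := (convexOn_pow (𝕜 := ℝ) r).2 (Set.mem_Ici.2 hx) (Set.mem_Ici.2 hy) ha hb hab
  simpa using h

set_option maxHeartbeats 1000000 in
theorem g_roots (n r k : ℕ) (hn : 2 ≤ n) (hr : 3 ≤ r) (hk1 : 1 ≤ k) (hk2 : k ≤ n - 1)
    (S1 Sr : ℝ) (hS1 : 0 < S1) (hSr : 0 < Sr) (hlt : S1 ^ r < (n : ℝ) ^ (r - 1) * Sr)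
    (g : ℝ → ℝ)
    (hg : ∀ α, g α = k * (1 + α * ((n : ℝ) / k - 1)) ^ r + ((n : ℝ) - k) * (1 - α) ^ r
      - (n : ℝ) ^ r * Sr / S1 ^ r)
    (ntilde : ℝ) (hntilde : ntilde ^ (r - 1) = S1 ^ r / Sr) (hntilde1 : 1 ≤ ntilde) (hntilden : ntilde ≤ n) :
    ((∃ α ∈ Set.Ioo (-(k : ℝ) / ((n : ℝ) - k)) 0, g α = 0) ↔ (n : ℝ) - ntilde < k) ∧
      ((∃ α ∈ Set.Ioo (0 : ℝ) 1, g α = 0) ↔ (k : ℝ) < ntilde) := by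
  have hr0 : r ≠ 0 := by omega
  have hr1 : r - 1 ≠ 0 := by omega
  have hKpos : (0 : ℝ) < k := by exact_mod_cast hk1
  have hknat : k < n := by omega
  have hNK : (k : ℝ) < n := by exact_mod_cast hknat
  have hNKpos : (0 : ℝ) < (n : ℝ) - k := by linarith
  have hNpos : (0 : ℝ) < n := by positivity
  have hS1r : (0 : ℝ) < S1 ^ r := by positivity
  have hntpos : (0 : ℝ) < ntilde := by linarith
  have hntr : (0 : ℝ) < ntilde ^ (r - 1) := by positivity
  have hNr : (0 : ℝ) < (n : ℝ) ^ r := by positivity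
  have hnpow : (n : ℝ) ^ r = (n : ℝ) ^ (r - 1) * n := by
    rw [← pow_succ]; congr 1; omega
  set C : ℝ := (n : ℝ) ^ r * Sr / S1 ^ r with hCdef
  clear_value C
  -- C = n^r / ntilde^(r-1)
  have hC : C = (n : ℝ) ^ r / ntilde ^ (r - 1) := by
    rw [hCdef, hntilde]
    field_simp
  have hCgtn : (n : ℝ) < C := by
    rw [hCdef, lt_div_iff₀ hS1r, hnpow]
    calc (n : ℝ) * S1 ^ r < (n : ℝ) * ((n : ℝ) ^ (r - 1) * Sr) := by
          exact mul_lt_mul_of_pos_left hlt hNpos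
      _ = (n : ℝ) ^ (r - 1) * (n : ℝ) * Sr := by ring
  set c : ℝ := (n : ℝ) / k - 1 with hcdef
  clear_value c
  have hc : c = ((n : ℝ) - k) / k := by rw [hcdef]; field_simp
  set m : ℝ := (k : ℝ) / ((n : ℝ) - k) with hmdef
  clear_value m
  have hmpos : 0 < m := by rw [hmdef]; positivity
  have hmc : m * c = 1 := by rw [hmdef, hc]; field_simp
  -- key values
  have hg0 : g 0 = (n : ℝ) - C := by rw [hg]; simp
  have hg0neg : g 0 < 0 := by rw [hg0]; linarith
  have hg1 : g 1 = (k : ℝ) * (1 + c) ^ r - C := by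
    rw [hg]
    have h1 : (1 : ℝ) - 1 = 0 := by ring
    rw [h1, zero_pow hr0]
    ring
  have hgm : g (-m) = ((n : ℝ) - k) * (1 + m) ^ r - C := by
    rw [hg]
    have h1 : (1 : ℝ) + -m * c = 0 := by
      have : m * c = 1 := hmc
      nlinarith [hmc]
    rw [h1, zero_pow hr0]
    ring
  -- rewrite the g 1 value
  have h1c : (1 : ℝ) + c = (n : ℝ) / k := by rw [hcdef]; ring
  have hg1' : g 1 = (n : ℝ) ^ r / (k : ℝ) ^ (r - 1) - C := by
    rw [hg1, h1c, div_pow]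
    rw [show (k : ℝ) ^ r = (k : ℝ) ^ (r - 1) * k by rw [← pow_succ]; congr 1; omega]
    field_simp
  have h1m : (1 : ℝ) + m = (n : ℝ) / ((n : ℝ) - k) := by rw [hmdef]; field_simp; ring
  have hgm' : g (-m) = (n : ℝ) ^ r / ((n : ℝ) - k) ^ (r - 1) - C := by
    rw [hgm, h1m, div_pow]
    rw [show ((n : ℝ) - k) ^ r = ((n : ℝ) - k) ^ (r - 1) * ((n : ℝ) - k) by
      rw [← pow_succ]; congr 1; omega]
    field_simp
  -- sign equivalences
  have hKr : (0 : ℝ) < (k : ℝ) ^ (r - 1) := by positivity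
  have hNKr : (0 : ℝ) < ((n : ℝ) - k) ^ (r - 1) := by positivity
  have hg1sign : 0 < g 1 ↔ (k : ℝ) < ntilde := by
    rw [hg1', hC, sub_pos, div_lt_div_iff₀ hntr hKr, mul_lt_mul_iff_right₀ hNr,
      pow_lt_pow_iff_left₀ (by positivity) hntpos.le hr1]
  have hgmsign : 0 < g (-m) ↔ (n : ℝ) - ntilde < k := by
    rw [hgm', hC, sub_pos, div_lt_div_iff₀ hntr hNKr, mul_lt_mul_iff_right₀ hNr,
      pow_lt_pow_iff_left₀ hNKpos.le hntpos.le hr1]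
    constructor <;> intro <;> linarith
  -- continuity
  have hgc : Continuous g := by
    have : g = fun α => (k : ℝ) * (1 + α * c) ^ r
        + ((n : ℝ) - k) * (1 - α) ^ r - C := funext hg
    rw [this]; fun_prop
  -- convexity bound on (0,1)
  have hconvR : ∀ α ∈ Set.Ioo (0 : ℝ) 1, g α ≤ (1 - α) * g 0 + α * g 1 := by
    intro α hα
    obtain ⟨hα0, hα1⟩ := hα
    have h1 : ((1 - α) * 1 + α * (1 + c)) ^ r ≤ (1 - α) * 1 ^ r + α * (1 + c) ^ r :=
      pow_convex_combo r 1 (1 + c) (1 - α) α one_pos.le (by rw [h1c]; positivity)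
        (by linarith) hα0.le (by ring)
    have h2 : ((1 - α) * 1 + α * 0) ^ r ≤ (1 - α) * 1 ^ r + α * 0 ^ r :=
      pow_convex_combo r 1 0 (1 - α) α one_pos.le le_rfl (by linarith) hα0.le (by ring)
    rw [show (1 - α) * 1 + α * (1 + c) = 1 + α * c by ring] at h1
    rw [show (1 - α) * 1 + α * 0 = 1 - α by ring, zero_pow hr0] at h2
    have hA := mul_le_mul_of_nonneg_left h1 hKpos.le
    have hB := mul_le_mul_of_nonneg_left h2 hNKpos.le
    simp only [one_pow] at hA hB
    rw [hg, hg0, hg1]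
    have key : (1 - α) * ((n : ℝ) - C) + α * ((k : ℝ) * (1 + c) ^ r - C)
        = (k : ℝ) * ((1 - α) * 1 + α * (1 + c) ^ r)
          + ((n : ℝ) - k) * ((1 - α) * 1 + α * 0) - C := by ring
    rw [key]
    linarith only [hA, hB]
  -- convexity bound on (-m, 0)
  have hconvL : ∀ α ∈ Set.Ioo (-m) 0, g α ≤ (-α / m) * g (-m) + (1 + α / m) * g 0 := by
    intro α hα
    obtain ⟨hα0, hα1⟩ := hα
    have htpos : 0 < -α / m := by
      apply div_pos (by linarith) hmpos
    have ht1 : -α / m < 1 := by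
      rw [div_lt_one hmpos]; linarith
    set t : ℝ := -α / m with htdef
    clear_value t
    have htm : t * m = -α := by rw [htdef]; field_simp
    have h1 : (t * 0 + (1 - t) * 1) ^ r ≤ t * 0 ^ r + (1 - t) * 1 ^ r :=
      pow_convex_combo r 0 1 t (1 - t) le_rfl one_pos.le htpos.le (by linarith) (by ring)
    have h2 : (t * (1 + m) + (1 - t) * 1) ^ r ≤ t * (1 + m) ^ r + (1 - t) * 1 ^ r :=
      pow_convex_combo r (1 + m) 1 t (1 - t) (by linarith) one_pos.le htpos.le
        (by linarith) (by ring)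
    have hα' : α = -(t * m) := by linarith [htm]
    have hαc : α * c = -t := by
      calc α * c = -(t * (m * c)) := by rw [hα']; ring
        _ = -t := by rw [hmc]; ring
    have hbase1 : t * 0 + (1 - t) * 1 = 1 + α * c := by linarith [hαc]
    have hbase2 : t * (1 + m) + (1 - t) * 1 = 1 - α := by
      have : t * (1 + m) + (1 - t) * 1 = 1 + t * m := by ring
      rw [this, htm]; ring
    rw [hbase1, zero_pow hr0] at h1
    rw [hbase2] at h2
    have hA := mul_le_mul_of_nonneg_left h1 hKpos.le
    have hB := mul_le_mul_of_nonneg_left h2 hNKpos.le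
    simp only [one_pow] at hA hB
    have h1t : 1 - t = 1 + α / m := by rw [htdef]; ring
    rw [hg, hg0, hgm, ← h1t]
    have key : t * (((n : ℝ) - k) * (1 + m) ^ r - C) + (1 - t) * ((n : ℝ) - C)
        = (k : ℝ) * (t * 0 + (1 - t) * 1)
          + ((n : ℝ) - k) * (t * (1 + m) ^ r + (1 - t) * 1) - C := by ring
    rw [key]
    linarith only [hA, hB]
  have hmL : -(k : ℝ) / ((n : ℝ) - k) = -m := by rw [hmdef]; ring
  constructor
  · rw [hmL]
    constructor
    · rintro ⟨α, hα, hgα⟩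
      by_contra hle
      push_neg at hle
      have hgmle : g (-m) ≤ 0 := by
        by_contra hpos
        push_neg at hpos
        exact absurd (hgmsign.1 hpos) (not_lt.2 hle)
      have := hconvL α hα
      obtain ⟨hα0, hα1⟩ := hα
      have htpos : 0 < -α / m := div_pos (by linarith) hmpos
      have ht1 : -α / m < 1 := by rw [div_lt_one hmpos]; linarith
      have h1t : 0 < 1 + α / m := by
        have : 1 + α / m = 1 - (-α / m) := by ring
        rw [this]; linarith
      nlinarith [mul_nonpos_of_nonneg_of_nonpos htpos.le hgmle,
        mul_neg_of_pos_of_neg h1t hg0neg]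
    · intro hlt'
      have hgmpos : 0 < g (-m) := hgmsign.2 hlt'
      have hmem : (0 : ℝ) ∈ Set.Ioo (g 0) (g (-m)) := ⟨hg0neg, hgmpos⟩
      have hsub := intermediate_value_Ioo' (a := -m) (b := 0) (by linarith) hgc.continuousOn
      obtain ⟨α, hα, hgα⟩ := hsub hmem
      exact ⟨α, hα, hgα⟩
  · constructor
    · rintro ⟨α, hα, hgα⟩
      by_contra hle
      push_neg at hle
      have hg1le : g 1 ≤ 0 := by
        by_contra hpos
        push_neg at hpos
        exact absurd (hg1sign.1 hpos) (not_lt.2 hle)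
      have := hconvR α hα
      obtain ⟨hα0, hα1⟩ := hα
      nlinarith [mul_nonpos_of_nonneg_of_nonpos hα0.le hg1le,
        mul_neg_of_pos_of_neg (by linarith : (0:ℝ) < 1 - α) hg0neg]
    · intro hlt'
      have hg1pos : 0 < g 1 := hg1sign.2 hlt'
      have hmem : (0 : ℝ) ∈ Set.Ioo (g 0) (g 1) := ⟨hg0neg, hg1pos⟩
      obtain ⟨α, hα, hgα⟩ :=
        intermediate_value_Ioo (a := (0:ℝ)) (b := 1) (by norm_num) hgc.continuousOn hmem
      exact ⟨α, hα, hgα⟩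
end

section
/- Let n ≥ 2 and let f(x) = x^n + c_{n−1}x^{n−1} + ... + c_0 be a monic real polynomial satisfying f''(x) − (λx − μ)f'(x) + λn f(x) = 0 with λ ≠ 0. Then c_{n−1} = −nμ/λ and c_{n−2} = C(n,2)(μ^2 − λ)/λ^2, and consequently (n−1)c_{n−1}^2 − 2n c_{n−2} = C(n,2)·(2n/λ). -/
open Polynomial

theorem coeffs_from_ode (n : ℕ) (hn : 2 ≤ n) (lam mu : ℝ) (hlam : lam ≠ 0)
    (f : Polynomial ℝ) (hmonic : f.Monic) (hdeg : f.natDegree = n)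
    (hode : derivative (derivative f) - (C lam * X - C mu) * derivative f
      + C (lam * n) * f = 0) :
    f.coeff (n - 1) = -(n : ℝ) * mu / lam ∧
      f.coeff (n - 2) = (n.choose 2 : ℝ) * (mu ^ 2 - lam) / lam ^ 2 ∧
      ((n : ℝ) - 1) * (f.coeff (n - 1)) ^ 2 - 2 * n * f.coeff (n - 2)
        = (n.choose 2 : ℝ) * (2 * n / lam) := by
  obtain ⟨m, rfl⟩ : ∃ m, n = m + 2 := ⟨n - 2, by omega⟩
  have hc2 : f.coeff (m + 2) = 1 := by rw [← hdeg]; exact hmonic.coeff_natDegree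
  have hc3 : f.coeff (m + 3) = 0 := coeff_eq_zero_of_natDegree_lt (by omega)
  have h1 := congrArg (fun p => p.coeff (m + 1)) hode
  have h2 := congrArg (fun p => p.coeff m) hode
  simp only [sub_mul, X_mul, mul_assoc] at h1 h2
  simp only [coeff_add, coeff_sub, coeff_zero, coeff_C_mul, coeff_mul_X,
    coeff_derivative, hc2, hc3] at h1 h2
  have hX : (derivative f * X).coeff m = f.coeff m * m := by
    rcases m with _ | k
    · simp
    · rw [coeff_mul_X, coeff_derivative]; push_cast; ring
  rw [hX] at h2
  push_cast at h1 h2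
  have e1 : lam * f.coeff (m + 1) = -((m : ℝ) + 2) * mu := by linear_combination h1
  have e2 : 2 * lam ^ 2 * f.coeff m = ((m : ℝ) + 2) * ((m : ℝ) + 1) * (mu ^ 2 - lam) := by
    linear_combination lam * h2 - ((m : ℝ) + 1) * mu * e1
  have hch : (((m + 2).choose 2 : ℕ) : ℝ) = ((m : ℝ) + 1) * ((m : ℝ) + 2) / 2 := by
    rw [Nat.cast_choose_two]; push_cast; ring
  have g1 : f.coeff (m + 2 - 1) = -((m : ℝ) + 2) * mu / lam := by
    show f.coeff (m + 1) = _
    field_simp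
    linear_combination e1
  have g2 : f.coeff (m + 2 - 2) = (((m + 2).choose 2 : ℕ) : ℝ) * (mu ^ 2 - lam) / lam ^ 2 := by
    show f.coeff m = _
    rw [hch]
    field_simp
    linear_combination e2
  refine ⟨by push_cast; exact g1, by push_cast at g2 ⊢; exact g2, ?_⟩
  rw [g1, g2, hch]
  push_cast
  field_simp
  ring
end

section
/- Let n ≥ 2 and let f be a monic real polynomial of degree n satisfying f''(x) − (λx − μ)f'(x) + λn f(x) = 0 with λ ≠ 0, and suppose f has distinct roots. Then the discriminant of f equals Y(n)·λ^{−C(n,2)}, where Y(n) = 2^2·3^3···n^n is the hyperfactorial and C(n,2) = n(n−1)/2. -/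
open Polynomial

/-- The hyperfactorial `Y(n) = 2^2 · 3^3 ⋯ n^n`. -/
def hyperfactorial (n : ℕ) : ℕ := ∏ k ∈ Finset.range (n + 1), k ^ k


lemma mprod_swap (s t : Multiset ℂ) (f : ℂ → ℂ → ℂ) :
    (s.map (fun a => (t.map (f a)).prod)).prod
      = (t.map (fun b => (s.map (fun a => f a b)).prod)).prod := by
  induction s using Multiset.induction with
  | empty => simp
  | cons a s ih => simp [ih, ← Multiset.prod_map_mul]

lemma mprod_const_mul (c : ℂ) (h : ℂ → ℂ) (s : Multiset ℂ) :
    (s.map (fun z => c * h z)).prod = c ^ Multiset.card s * (s.map h).prod := by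
  induction s using Multiset.induction with
  | empty => simp
  | cons a s ih => simp [ih, pow_succ]; ring

lemma key : ∀ (n : ℕ) (lam mu : ℂ), lam ≠ 0 → ∀ f : ℂ[X], f.Monic → f.natDegree = n →
    (derivative (derivative f) - (C lam * X - C mu) * derivative f + C (lam * n) * f = 0) →
    (f.roots.map (fun z => (derivative f).eval z)).prod
      = (-1) ^ n.choose 2 * (hyperfactorial n : ℂ) * lam⁻¹ ^ n.choose 2 := by
  intro n
  induction n with
  | zero =>
    intro lam mu hlam f hm hdeg _
    have : f = 1 := hm.natDegree_eq_zero.mp hdeg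
    simp [this, hyperfactorial]
  | succ n ih =>
    intro lam mu hlam f hm hdeg hode
    have hn1 : ((n : ℂ) + 1) ≠ 0 := by
      exact_mod_cast (Nat.cast_ne_zero (R := ℂ)).mpr (Nat.succ_ne_zero n)
    have hc : (derivative f).coeff n = (n : ℂ) + 1 := by
      rw [coeff_derivative]
      have : f.coeff (n + 1) = 1 := by
        have := hm.leadingCoeff
        rwa [leadingCoeff, hdeg] at this
      simp [this]
    have hdne : derivative f ≠ 0 := fun h => by simp [h] at hc; exact hn1 hc.symm
    have hdeg' : (derivative f).natDegree = n := by
      refine le_antisymm ?_ (le_natDegree_of_ne_zero (by rw [hc]; exact hn1))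
      have := natDegree_derivative_le f
      omega
    have hlcd : (derivative f).leadingCoeff = (n : ℂ) + 1 := by
      rw [leadingCoeff, hdeg', hc]
    set g : ℂ[X] := C ((n : ℂ) + 1)⁻¹ * derivative f with hg
    have hfd : derivative f = C ((n : ℂ) + 1) * g := by
      rw [hg, ← mul_assoc, ← C_mul, mul_inv_cancel₀ hn1, C_1, one_mul]
    have hgm : g.Monic := by
      rw [Monic, leadingCoeff_mul, leadingCoeff_C, hlcd, inv_mul_cancel₀ hn1]
    have hgdeg : g.natDegree = n := by
      rw [hg, natDegree_C_mul (inv_ne_zero hn1), hdeg']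
    -- ODE for g
    have h1 := congrArg derivative hode
    simp only [derivative_sub, derivative_add, derivative_mul, derivative_zero,
      derivative_C, derivative_X, zero_mul, mul_one, add_zero, zero_sub, sub_zero,
      zero_add] at h1
    have h2 : derivative (derivative (derivative f)) - (C lam * X - C mu) *
        derivative (derivative f) + C (lam * n) * derivative f = 0 := by
      have hcast : C (lam * ((n : ℂ) + 1)) = C (lam * n) + C lam := by
        rw [← C_add]; ring_nf
      rw [Nat.cast_succ] at h1
      linear_combination h1 - derivative f * hcast
    rw [hfd] at h2
    simp only [derivative_C_mul] at h2
    have h3 : C ((n : ℂ) + 1) * (derivative (derivative g) - (C lam * X - C mu) *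
        derivative g + C (lam * n) * g) = C ((n : ℂ) + 1) * 0 := by
      rw [mul_zero]; linear_combination h2
    have hodeg := mul_left_cancel₀ ((C_ne_zero (a := (n : ℂ) + 1)).mpr hn1) h3
    have ihg := ih lam mu hlam g hgm hgdeg hodeg
    have hs : Multiset.card f.roots = n + 1 := by
      rw [← hdeg]; exact splits_iff_card_roots.mp (IsAlgClosed.splits f)
    have ht : Multiset.card g.roots = n := by
      rw [← hgdeg]; exact splits_iff_card_roots.mp (IsAlgClosed.splits g)
    have hfp : f = (f.roots.map fun a => X - C a).prod :=
      (IsAlgClosed.splits f).eq_prod_roots_of_monic hm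
    have hgp : g = (g.roots.map fun a => X - C a).prod :=
      (IsAlgClosed.splits g).eq_prod_roots_of_monic hgm
    have heval_f : ∀ y : ℂ, f.eval y = (f.roots.map (fun z => y - z)).prod := by
      intro y; conv_lhs => rw [hfp]
      rw [eval_multiset_prod, Multiset.map_map]; simp
    have heval_g : ∀ y : ℂ, g.eval y = (g.roots.map (fun z => y - z)).prod := by
      intro y; conv_lhs => rw [hgp]
      rw [eval_multiset_prod, Multiset.map_map]; simp
    have hroot : ∀ y ∈ g.roots, f.eval y = -lam⁻¹ * (derivative g).eval y := by
      intro y hy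
      have hgy : g.eval y = 0 := (mem_roots hgm.ne_zero).mp hy
      have h := congrArg (eval y) hode
      rw [hfd] at h
      simp only [derivative_C_mul, eval_add, eval_sub, eval_mul, eval_C, eval_X,
        eval_zero, hgy, mul_zero, sub_zero] at h
      push_cast at h
      have h4 : lam * f.eval y = - (derivative g).eval y := by
        apply mul_left_cancel₀ hn1
        linear_combination h
      linear_combination lam⁻¹ * h4 - (eval y f) * (inv_mul_cancel₀ hlam)
    calc (f.roots.map (fun z => (derivative f).eval z)).prod
        = (f.roots.map (fun z => ((n:ℂ)+1) * g.eval z)).prod := by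
          simp only [hfd, eval_mul, eval_C]
      _ = ((n:ℂ)+1)^(n+1) * (f.roots.map (fun z => g.eval z)).prod := by
          rw [mprod_const_mul, hs]
      _ = ((n:ℂ)+1)^(n+1) *
          (g.roots.map (fun y => (f.roots.map (fun z => z - y)).prod)).prod := by
          rw [← mprod_swap (f := fun a b => a - b)]
          congr 1
          exact congrArg Multiset.prod (Multiset.map_congr rfl fun z _ => heval_g z)
      _ = ((n:ℂ)+1)^(n+1) *
          (g.roots.map (fun y => (-1:ℂ)^(n+1) * f.eval y)).prod := by
          congr 1
          refine congrArg Multiset.prod (Multiset.map_congr rfl fun y _ => ?_)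
          have : (f.roots.map (fun z => z - y)).prod
              = (f.roots.map (fun z => (-1) * (y - z))).prod := by
            refine congrArg Multiset.prod (Multiset.map_congr rfl fun z _ => by ring)
          rw [this, mprod_const_mul, hs, heval_f]
      _ = ((n:ℂ)+1)^(n+1) * ((-1:ℂ)^(n+1))^n *
          (g.roots.map (fun y => f.eval y)).prod := by
          rw [mprod_const_mul, ht]; ring
      _ = ((n:ℂ)+1)^(n+1) * ((-1:ℂ)^(n+1))^n * ((-lam⁻¹)^n *
          (g.roots.map (fun y => (derivative g).eval y)).prod) := by
          congr 1
          rw [← ht, ← mprod_const_mul]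
          exact congrArg Multiset.prod (Multiset.map_congr rfl hroot)
      _ = (-1) ^ (n+1).choose 2 * (hyperfactorial (n+1) : ℂ) * lam⁻¹ ^ (n+1).choose 2 := by
          rw [ihg]
          have hchoose : (n+1).choose 2 = n + n.choose 2 := by
            rw [Nat.choose_succ_succ, Nat.choose_one_right]
          have hhyp : hyperfactorial (n+1) = hyperfactorial n * (n+1)^(n+1) :=
            Finset.prod_range_succ _ _
          have hsign : ((-1:ℂ)^(n+1))^n = 1 := by
            rw [← pow_mul]
            exact Even.neg_one_pow (by rw [mul_comm]; exact Nat.even_mul_succ_self n)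
          rw [hsign, hchoose, hhyp, neg_pow]
          push_cast
          ring

theorem disc_from_ode (n : ℕ) (hn : 2 ≤ n) (lam mu : ℝ) (hlam : lam ≠ 0)
    (x : Fin n → ℝ) (hx : Function.Injective x)
    (f : Polynomial ℝ) (hf : f = ∏ i : Fin n, (X - C (x i)))
    (hode : derivative (derivative f) - (C lam * X - C mu) * derivative f
      + C (lam * n) * f = 0) :
    (∏ i : Fin n, ∏ j ∈ Finset.Ioi i, (x i - x j) ^ 2)
      = (hyperfactorial n : ℝ) * lam ^ (-(n.choose 2 : ℤ)) := by
  classical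
  set xc : Fin n → ℂ := fun i => ((x i : ℂ)) with hxc
  have hxinj : Function.Injective xc := fun a b h => hx (Complex.ofReal_inj.mp (by simpa [hxc] using h))
  set F : ℂ[X] := f.map (algebraMap ℝ ℂ) with hFdef
  have hF : F = ∏ i : Fin n, (X - C (xc i)) := by
    rw [hFdef, hf, Polynomial.map_prod]
    simp [Polynomial.map_sub, hxc]
  have hFm : F.Monic := hF ▸ monic_prod_of_monic _ _ fun i _ => monic_X_sub_C _
  have hFdeg : F.natDegree = n := by
    rw [hF, natDegree_prod _ _ (fun i _ => X_sub_C_ne_zero (xc i))]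
    simp [natDegree_X_sub_C]
  have hFode : derivative (derivative F) - (C (lam:ℂ) * X - C (mu:ℂ)) * derivative F
      + C ((lam:ℂ) * n) * F = 0 := by
    have h := congrArg (Polynomial.map (algebraMap ℝ ℂ)) hode
    rw [hFdef]
    simpa [Polynomial.derivative_map, Polynomial.map_sub, Polynomial.map_add,
      Polynomial.map_mul, mul_assoc] using h
  have hkey := key n (lam:ℂ) (mu:ℂ) (by exact_mod_cast Complex.ofReal_ne_zero.mpr hlam)
    F hFm hFdeg hFode
  have hroots : F.roots = Finset.univ.val.map xc := by
    rw [hF]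
    have : ∏ i : Fin n, (X - C (xc i))
        = ((Finset.univ.val.map xc).map (fun a => X - C a)).prod := by
      rw [Multiset.map_map]; rfl
    rw [this, roots_multiset_prod_X_sub_C]
  have hlhs : (F.roots.map (fun z => (derivative F).eval z)).prod
      = ∏ i : Fin n, (derivative F).eval (xc i) := by
    rw [hroots, Multiset.map_map]; rfl
  have hder : ∀ i : Fin n, (derivative F).eval (xc i)
      = ∏ j ∈ Finset.univ.erase i, (xc i - xc j) := by
    intro i
    have hmem : xc i ∈ Finset.univ.val.map xc :=
      Multiset.mem_map_of_mem _ (Finset.mem_univ_val i)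
    have := eval_multiset_prod_X_sub_C_derivative (S := Finset.univ.val.map xc)
      (r := xc i) hmem
    rw [hF]
    have hprodeq : ∏ j : Fin n, (X - C (xc j))
        = ((Finset.univ.val.map xc).map (fun a => X - C a)).prod := by
      rw [Multiset.map_map]; rfl
    rw [hprodeq, this]
    have herase : (Finset.univ.val.map xc).erase (xc i)
        = ((Finset.univ.erase i).val.map xc) := by
      rw [Finset.erase_val, ← Multiset.map_erase _ hxinj]
    rw [herase, Finset.prod_eq_multiset_prod, Multiset.map_map]
    rfl
  -- combinatorics
  have hsplit : ∀ i : Fin n, Finset.univ.erase i = Finset.Iio i ∪ Finset.Ioi i := by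
    intro i; ext j
    simp only [Finset.mem_erase, Finset.mem_univ, and_true, Finset.mem_union,
      Finset.mem_Iio, Finset.mem_Ioi]
    exact ⟨fun h => h.lt_or_gt, fun h => h.elim ne_of_lt (fun h' => (ne_of_lt h').symm)⟩
  have hdisj : ∀ i : Fin n, Disjoint (Finset.Iio i) (Finset.Ioi i) := by
    intro i
    refine Finset.disjoint_left.mpr fun j hj hj' => ?_
    exact absurd (Finset.mem_Ioi.mp hj') (not_lt.mpr (le_of_lt (Finset.mem_Iio.mp hj)))
  have hIio : (∏ i : Fin n, ∏ j ∈ Finset.Iio i, (xc i - xc j))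
      = (-1:ℂ) ^ n.choose 2 * ∏ i : Fin n, ∏ j ∈ Finset.Ioi i, (xc i - xc j) := by
    have step1 : ∀ i : Fin n, ∏ j ∈ Finset.Iio i, (xc i - xc j)
        = (-1:ℂ) ^ (i : ℕ) * ∏ j ∈ Finset.Iio i, (xc j - xc i) := by
      intro i
      rw [← Fin.card_Iio i, ← Finset.prod_const, ← Finset.prod_mul_distrib]
      exact Finset.prod_congr rfl fun j _ => by ring
    rw [Finset.prod_congr rfl fun i _ => step1 i, Finset.prod_mul_distrib,
      Finset.prod_pow_eq_pow_sum]
    congr 1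
    · congr 1
      rw [Fin.sum_univ_eq_sum_range (fun i => i), Finset.sum_range_id,
        Nat.choose_two_right]
    · exact Finset.prod_comm' fun i j => by simp
  have hmain : (∏ i : Fin n, ∏ j ∈ Finset.Ioi i, (xc i - xc j) ^ 2)
      = (hyperfactorial n : ℂ) * ((lam:ℂ)⁻¹) ^ n.choose 2 := by
    have expand : (∏ i : Fin n, ∏ j ∈ Finset.univ.erase i, (xc i - xc j))
        = (-1:ℂ) ^ n.choose 2 * ∏ i : Fin n, ∏ j ∈ Finset.Ioi i, (xc i - xc j) ^ 2 := by
      calc (∏ i : Fin n, ∏ j ∈ Finset.univ.erase i, (xc i - xc j))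
          = ∏ i : Fin n, ((∏ j ∈ Finset.Iio i, (xc i - xc j))
              * ∏ j ∈ Finset.Ioi i, (xc i - xc j)) := by
            refine Finset.prod_congr rfl fun i _ => ?_
            rw [hsplit i, Finset.prod_union (hdisj i)]
        _ = (∏ i : Fin n, ∏ j ∈ Finset.Iio i, (xc i - xc j))
              * ∏ i : Fin n, ∏ j ∈ Finset.Ioi i, (xc i - xc j) := Finset.prod_mul_distrib
        _ = (-1:ℂ) ^ n.choose 2 * ∏ i : Fin n, ∏ j ∈ Finset.Ioi i, (xc i - xc j) ^ 2 := by
            rw [hIio, mul_assoc, ← Finset.prod_mul_distrib]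
            congr 1
            refine Finset.prod_congr rfl fun i _ => ?_
            rw [← Finset.prod_mul_distrib]
            exact Finset.prod_congr rfl fun j _ => (sq _).symm
    have h2 : (-1:ℂ) ^ n.choose 2 * ∏ i : Fin n, ∏ j ∈ Finset.Ioi i, (xc i - xc j) ^ 2
        = (-1:ℂ) ^ n.choose 2 * ((hyperfactorial n : ℂ) * ((lam:ℂ)⁻¹) ^ n.choose 2) := by
      rw [← expand, ← mul_assoc, ← hkey, hlhs]
      exact Finset.prod_congr rfl fun i _ => (hder i).symm
    exact mul_left_cancel₀ (pow_ne_zero _ (neg_ne_zero.mpr one_ne_zero)) h2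
  have hfinal : ((∏ i : Fin n, ∏ j ∈ Finset.Ioi i, (x i - x j) ^ 2 : ℝ) : ℂ)
      = (((hyperfactorial n : ℝ) * (lam⁻¹) ^ n.choose 2 : ℝ) : ℂ) := by
    push_cast
    exact hmain
  have := Complex.ofReal_injective hfinal
  rw [this, zpow_neg, zpow_natCast, ← inv_pow]
end

section
/- Let n ≥ 2, a > 0, b, c, d real, S_1, S_2 > 0 with (n−1)S_2 < S_1^2 < n S_2, and let x_1,...,x_n > 0 satisfy Σ x_i = S_1 and Σ x_i^2 = S_2. Define F = (a/n)Σ x_i^2 + (b/n^2)(Σ x_i)^2 + (c/n)Σ x_i + d and let Δ = ∏_{i<j}(x_i−x_j)^2. Then F ≥ C(n,2)·(2a/n)·(Δ/Y(n))^{1/C(n,2)} + (a+b)S_1^2/n^2 + c S_1/n + d. -/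
open Polynomial Finset Matrix

namespace SchurAux

variable {n : ℕ} (x : Fin n → ℝ)

/-- Discrete inner product of polynomials over the point configuration `x`. -/
noncomputable def ip (p r : ℝ[X]) : ℝ := ∑ i, p.eval (x i) * r.eval (x i)

noncomputable def step (pq : ℝ[X] × ℝ[X]) : ℝ[X] × ℝ[X] :=
  (pq.2, (X - Polynomial.C (ip x (X * pq.2) pq.2 / ip x pq.2 pq.2)) * pq.2
    - Polynomial.C (ip x pq.2 pq.2 / ip x pq.1 pq.1) * pq.1)

noncomputable def qp (k : ℕ) : ℝ[X] × ℝ[X] :=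
  (step x)^[k] (1, X - Polynomial.C (ip x (X * 1) 1 / ip x 1 1))

/-- The monic orthogonal polynomials w.r.t. the counting measure on the points. -/
noncomputable def qs (k : ℕ) : ℝ[X] := (qp x k).1

/-- Squared norms. -/
noncomputable def NN (k : ℕ) : ℝ := ip x (qs x k) (qs x k)

/-- Diagonal recurrence coefficients. -/
noncomputable def AA (k : ℕ) : ℝ := ip x (X * qs x k) (qs x k) / NN x k

/-- Off-diagonal recurrence coefficients. -/
noncomputable def BB (k : ℕ) : ℝ := if k = 0 then 0 else NN x k / NN x (k - 1)

lemma qp_succ (k : ℕ) : qp x (k + 1) = step x (qp x k) := by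
  unfold qp; rw [Function.iterate_succ_apply']

lemma qs_zero : qs x 0 = 1 := rfl

lemma qp_snd (k : ℕ) : (qp x k).2 = qs x (k + 1) := by
  rw [show qs x (k+1) = (qp x (k+1)).1 from rfl, qp_succ]; rfl

lemma qs_one : qs x 1 = (X - Polynomial.C (AA x 0)) * qs x 0 - Polynomial.C (BB x 0) * qs x 0 := by
  have h : qs x 1 = X - Polynomial.C (ip x (X * 1) 1 / ip x 1 1) := by
    rw [← qp_snd]; rfl
  have hA : AA x 0 = ip x (X * 1) 1 / ip x 1 1 := rfl
  simp [h, hA, BB, qs_zero]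

lemma qs_succ_succ (k : ℕ) : qs x (k + 2) =
    (X - Polynomial.C (AA x (k+1))) * qs x (k+1) - Polynomial.C (BB x (k+1)) * qs x k := by
  have h1 : qs x (k + 2) = (step x (qp x (k+1))).1 := by rw [← qp_succ]; rfl
  have h2 : (step x (qp x (k+1))).1 = (qp x (k+1)).2 := rfl
  have h3 : qs x (k + 2) = (step x (qp x k)).2 := by rw [h1, h2, qp_succ]
  rw [h3]
  show (X - Polynomial.C (ip x (X * (qp x k).2) (qp x k).2 / ip x (qp x k).2 (qp x k).2)) * (qp x k).2
      - Polynomial.C (ip x (qp x k).2 (qp x k).2 / ip x (qp x k).1 (qp x k).1) * (qp x k).1 = _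
  rw [qp_snd]
  have h4 : (qp x k).1 = qs x k := rfl
  rw [h4]
  have hA : AA x (k+1) = ip x (X * qs x (k+1)) (qs x (k+1)) / ip x (qs x (k+1)) (qs x (k+1)) := rfl
  have hB : BB x (k+1) = ip x (qs x (k+1)) (qs x (k+1)) / ip x (qs x k) (qs x k) := by
    simp [BB, NN]
  rw [hA, hB]

lemma hX (k : ℕ) : X * qs x k = qs x (k+1) + Polynomial.C (AA x k) * qs x k
    + Polynomial.C (BB x k) * qs x (k-1) := by
  cases k with
  | zero =>
      show X * qs x 0 = qs x 1 + Polynomial.C (AA x 0) * qs x 0 + Polynomial.C (BB x 0) * qs x 0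
      linear_combination -qs_one x
  | succ m =>
      show X * qs x (m+1) = qs x (m+2) + Polynomial.C (AA x (m+1)) * qs x (m+1)
        + Polynomial.C (BB x (m+1)) * qs x m
      linear_combination -qs_succ_succ x m


lemma ip_symm (p r : ℝ[X]) : ip x p r = ip x r p := by
  unfold ip; exact Finset.sum_congr rfl fun i _ => mul_comm _ _

lemma ip_swapX (p r : ℝ[X]) : ip x (X * p) r = ip x (X * r) p := by
  unfold ip
  refine Finset.sum_congr rfl fun i _ => ?_
  simp only [eval_mul, eval_X]; ring

lemma ipE1 (a b : ℝ) (p r u : ℝ[X]) :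
    ip x ((X - Polynomial.C a) * p - Polynomial.C b * r) u
      = ip x (X * p) u - a * ip x p u - b * ip x r u := by
  unfold ip
  rw [Finset.mul_sum, Finset.mul_sum, ← Finset.sum_sub_distrib, ← Finset.sum_sub_distrib]
  refine Finset.sum_congr rfl fun i _ => ?_
  simp only [eval_mul, eval_sub, eval_X, eval_C]; ring

lemma ipE2 (a b : ℝ) (p r u w : ℝ[X]) :
    ip x (p + Polynomial.C a * r + Polynomial.C b * u) w
      = ip x p w + a * ip x r w + b * ip x u w := by
  unfold ip
  rw [Finset.mul_sum, Finset.mul_sum, ← Finset.sum_add_distrib, ← Finset.sum_add_distrib]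
  refine Finset.sum_congr rfl fun i _ => ?_
  simp only [eval_mul, eval_add, eval_X, eval_C]; ring

lemma ipE3 (p r : ℝ[X]) : ip x (X * (X * p)) r = ip x (X * p) (X * r) := by
  unfold ip
  refine Finset.sum_congr rfl fun i _ => ?_
  simp only [eval_mul, eval_X]; ring

lemma ipE5 (a b : ℝ) (p r u : ℝ[X]) :
    ip x (p + Polynomial.C a * r + Polynomial.C b * u) (p + Polynomial.C a * r + Polynomial.C b * u)
      = ip x p p + a^2 * ip x r r + b^2 * ip x u u
        + 2*a* ip x p r + 2*b* ip x p u + 2*(a*b)* ip x r u := by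
  unfold ip
  rw [Finset.mul_sum, Finset.mul_sum, Finset.mul_sum, Finset.mul_sum, Finset.mul_sum,
    ← Finset.sum_add_distrib, ← Finset.sum_add_distrib, ← Finset.sum_add_distrib,
    ← Finset.sum_add_distrib, ← Finset.sum_add_distrib]
  refine Finset.sum_congr rfl fun i _ => ?_
  simp only [eval_mul, eval_add, eval_X, eval_C]; ring

lemma qs_monic (k : ℕ) : (qs x k).Monic ∧ (qs x k).natDegree = k := by
  induction k using Nat.strong_induction_on with
  | _ k IH =>
    match k with
    | 0 => exact ⟨by rw [qs_zero]; exact monic_one, by rw [qs_zero]; simp⟩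
    | (m+1) =>
      have hrec : qs x (m+1) = (X - Polynomial.C (AA x m)) * qs x m
          - Polynomial.C (BB x m) * qs x (m-1) := by
        cases m with
        | zero => exact qs_one x
        | succ l => exact qs_succ_succ x l
      obtain ⟨hm, hd⟩ := IH m (Nat.lt_succ_self m)
      obtain ⟨hm', hd'⟩ := IH (m-1) (by omega)
      have hmul : ((X - Polynomial.C (AA x m)) * qs x m).Monic :=
        (monic_X_sub_C _).mul hm
      have hdmul : ((X - Polynomial.C (AA x m)) * qs x m).natDegree = m + 1 := by
        rw [(monic_X_sub_C _).natDegree_mul hm, natDegree_X_sub_C, hd, add_comm]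
      have hsmall : (Polynomial.C (BB x m) * qs x (m-1)).natDegree < m + 1 := by
        calc (Polynomial.C (BB x m) * qs x (m-1)).natDegree ≤ (qs x (m-1)).natDegree :=
              natDegree_C_mul_le _ _
          _ = m - 1 := hd'
          _ < m + 1 := by omega
      constructor
      · rw [hrec, sub_eq_add_neg]
        refine hmul.add_of_left ?_
        rw [degree_neg]
        refine lt_of_le_of_lt degree_le_natDegree ?_
        rw [degree_eq_natDegree hmul.ne_zero, hdmul]
        exact_mod_cast hsmall
      · rw [hrec, natDegree_sub_eq_left_of_natDegree_lt (by rw [hdmul]; exact hsmall), hdmul]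


lemma NN_nonneg (k : ℕ) : 0 ≤ NN x k := by
  unfold NN ip
  exact Finset.sum_nonneg fun i _ => mul_self_nonneg _

lemma Npos (hinj : Function.Injective x) {k : ℕ} (hk : k < n) : 0 < NN x k := by
  rcases (NN_nonneg x k).lt_or_eq with h | h
  · exact h
  · exfalso
    have hzero : ∀ i, (qs x k).eval (x i) = 0 := by
      intro i
      have h0 : ∀ j ∈ (univ : Finset (Fin n)),
          0 ≤ (qs x k).eval (x j) * (qs x k).eval (x j) :=
        fun j _ => mul_self_nonneg _
      have := (Finset.sum_eq_zero_iff_of_nonneg h0).mp h.symm i (mem_univ i)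
      exact mul_self_eq_zero.mp this
    have hq0 : qs x k = 0 := by
      refine Polynomial.eq_zero_of_natDegree_lt_card_of_eval_eq_zero _ hinj hzero ?_
      rw [(qs_monic x k).2, Fintype.card_fin]; exact hk
    exact (qs_monic x k).1.ne_zero hq0

lemma NN_zero_eq : NN x 0 = n := by
  unfold NN ip
  rw [qs_zero]
  simp

lemma orth (hinj : Function.Injective x) :
    ∀ k, k ≤ n → ∀ j, j < k → ip x (qs x j) (qs x k) = 0 := by
  intro k
  induction k using Nat.strong_induction_on with
  | _ k IH =>
    match k with
    | 0 => intro _ j hj; omega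
    | 1 =>
      intro hk j hj
      have hj0 : j = 0 := by omega
      subst hj0
      have hN0 : NN x 0 ≠ 0 := (Npos x hinj (by omega)).ne'
      rw [ip_symm, qs_one, ipE1]
      have hA : AA x 0 * ip x (qs x 0) (qs x 0) = ip x (X * qs x 0) (qs x 0) := by
        unfold AA NN at *
        field_simp
      have hB : BB x 0 = 0 := by simp [BB]
      rw [hB]
      linarith [hA]
    | (m+2) =>
      intro hk j hj
      have hNm1 : NN x (m+1) ≠ 0 := (Npos x hinj (by omega)).ne'
      have hNm : NN x m ≠ 0 := (Npos x hinj (by omega)).ne'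
      rw [ip_symm, qs_succ_succ, ipE1]
      rcases Nat.lt_or_ge j m with hjm | hjm
      · -- j < m
        have t1 : ip x (X * qs x (m+1)) (qs x j) = 0 := by
          rw [ip_swapX, hX x j, ipE2]
          rw [IH (m+1) (by omega) (by omega) (j+1) (by omega),
            IH (m+1) (by omega) (by omega) j (by omega)]
          have : ip x (qs x (j-1)) (qs x (m+1)) = 0 :=
            IH (m+1) (by omega) (by omega) (j-1) (by omega)
          rw [this]; ring
        have t2 : ip x (qs x (m+1)) (qs x j) = 0 := by
          rw [ip_symm]; exact IH (m+1) (by omega) (by omega) j (by omega)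
        have t3 : ip x (qs x m) (qs x j) = 0 := by
          rw [ip_symm]; exact IH m (by omega) (by omega) j (by omega)
        rw [t1, t2, t3]; ring
      rcases Nat.eq_or_lt_of_le hjm with hjeq | hjm'
      · -- j = m
        subst hjeq
        have t1 : ip x (X * qs x (m+1)) (qs x m) = NN x (m+1) := by
          rw [ip_swapX, hX x m, ipE2]
          rw [IH (m+1) (by omega) (by omega) m (by omega)]
          have h2 : ip x (qs x (m-1)) (qs x (m+1)) = 0 :=
            IH (m+1) (by omega) (by omega) (m-1) (by omega)
          rw [h2]
          unfold NN
          ring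
        have t2 : ip x (qs x (m+1)) (qs x m) = 0 := by
          rw [ip_symm]; exact IH (m+1) (by omega) (by omega) m (by omega)
        have t3 : BB x (m+1) * ip x (qs x m) (qs x m) = NN x (m+1) := by
          have hB : BB x (m+1) = NN x (m+1) / NN x m := by simp [BB]
          have : ip x (qs x m) (qs x m) = NN x m := rfl
          rw [hB, this]
          field_simp
        rw [t1, t2, t3]; ring
      · -- j = m+1
        have hjeq : j = m + 1 := by omega
        subst hjeq
        have t1 : AA x (m+1) * ip x (qs x (m+1)) (qs x (m+1))
            = ip x (X * qs x (m+1)) (qs x (m+1)) := by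
          unfold AA NN at *
          field_simp
        have t2 : ip x (qs x m) (qs x (m+1)) = 0 :=
          IH (m+1) (by omega) (by omega) m (by omega)
        rw [t2]
        linarith [t1]


/-- Matrix of orthogonal polynomial values. -/
noncomputable def Mm : Matrix (Fin n) (Fin n) ℝ :=
  Matrix.of fun i k => (qs x (k : ℕ)).eval (x i)

lemma hMtM (hinj : Function.Injective x) :
    (Mm x)ᵀ * Mm x = Matrix.diagonal (fun k : Fin n => NN x (k : ℕ)) := by
  ext k l
  rw [Matrix.mul_apply, Matrix.diagonal_apply]
  by_cases h : k = l
  · subst h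
    rw [if_pos rfl]
    unfold Mm NN ip
    simp [Matrix.transpose_apply]
  · rw [if_neg h]
    have hkl : (k : ℕ) ≠ (l : ℕ) := fun hc => h (Fin.ext hc)
    have : ∑ i, (Mm x)ᵀ k i * Mm x i l = ip x (qs x (k:ℕ)) (qs x (l:ℕ)) := by
      unfold Mm ip
      simp [Matrix.transpose_apply]
    rw [this]
    rcases Nat.lt_or_ge (k : ℕ) (l : ℕ) with hlt | hge
    · exact orth x hinj (l : ℕ) (le_of_lt l.isLt) (k : ℕ) hlt
    · rw [ip_symm]
      exact orth x hinj (k : ℕ) (le_of_lt k.isLt) (l : ℕ) (by omega)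

lemma hP (hinj : Function.Injective x) (i i' : Fin n) :
    ∑ k ∈ range n, (qs x k).eval (x i) * (qs x k).eval (x i') / NN x k
      = if i = i' then 1 else 0 := by
  have h1 : (Matrix.diagonal (fun k : Fin n => (NN x (k : ℕ))⁻¹) * (Mm x)ᵀ) * Mm x = 1 := by
    rw [Matrix.mul_assoc, hMtM x hinj, Matrix.diagonal_mul_diagonal]
    have : (fun k : Fin n => (NN x (k:ℕ))⁻¹ * NN x (k:ℕ)) = fun _ => (1:ℝ) := by
      funext k
      exact inv_mul_cancel₀ (Npos x hinj k.isLt).ne'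
    rw [this, Matrix.diagonal_one]
  have h2 : Mm x * (Matrix.diagonal (fun k : Fin n => (NN x (k : ℕ))⁻¹) * (Mm x)ᵀ) = 1 :=
    mul_eq_one_comm.mp h1
  have h4 : (Mm x * (Matrix.diagonal (fun k : Fin n => (NN x (k : ℕ))⁻¹) * (Mm x)ᵀ)) i i'
      = (1 : Matrix (Fin n) (Fin n) ℝ) i i' := by rw [h2]
  rw [Matrix.mul_apply, Matrix.one_apply] at h4
  rw [← h4]
  rw [← Fin.sum_univ_eq_sum_range (fun k => (qs x k).eval (x i) * (qs x k).eval (x i') / NN x k) n]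
  refine Finset.sum_congr rfl fun k _ => ?_
  rw [Matrix.mul_apply]
  unfold Mm
  simp only [Matrix.diagonal_apply, Matrix.transpose_apply, Matrix.of_apply]
  rw [Finset.sum_eq_single k]
  · rw [if_pos rfl]; field_simp
  · intro b _ hb; rw [if_neg (Ne.symm hb), zero_mul]
  · intro hk; exact absurd (mem_univ k) hk

lemma NN_top (hinj : Function.Injective x) (hn : 0 < n) : NN x n = 0 := by
  have hzero : ∀ i, (qs x n).eval (x i) = 0 := by
    intro i
    have key : (0:ℝ) = ∑ k ∈ range n,
        (qs x k).eval (x i) / NN x k * ip x (qs x k) (qs x n) := by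
      rw [Finset.sum_eq_zero]
      intro k hk
      rw [orth x hinj n le_rfl k (mem_range.mp hk), mul_zero]
    have expand : ∑ k ∈ range n, (qs x k).eval (x i) / NN x k * ip x (qs x k) (qs x n)
        = (qs x n).eval (x i) := by
      unfold ip
      calc ∑ k ∈ range n, (qs x k).eval (x i) / NN x k
              * ∑ i', (qs x k).eval (x i') * (qs x n).eval (x i')
          = ∑ k ∈ range n, ∑ i', ((qs x k).eval (x i) * (qs x k).eval (x i') / NN x k)
              * (qs x n).eval (x i') := by
            refine Finset.sum_congr rfl fun k _ => ?_
            rw [Finset.mul_sum]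
            refine Finset.sum_congr rfl fun i' _ => ?_
            ring
        _ = ∑ i', (∑ k ∈ range n, (qs x k).eval (x i) * (qs x k).eval (x i') / NN x k)
              * (qs x n).eval (x i') := by
            rw [Finset.sum_comm]
            refine Finset.sum_congr rfl fun i' _ => ?_
            rw [Finset.sum_mul]
        _ = ∑ i', (if i = i' then (1:ℝ) else 0) * (qs x n).eval (x i') := by
            refine Finset.sum_congr rfl fun i' _ => ?_
            rw [hP x hinj i i']
        _ = (qs x n).eval (x i) := by
            simp [ite_mul]
    rw [← expand, ← key]
  unfold NN ip
  exact Finset.sum_eq_zero fun i _ => by rw [hzero i, mul_zero]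

lemma tr_one (hinj : Function.Injective x) :
    ∑ k ∈ range n, AA x k = ∑ i, x i := by
  calc ∑ k ∈ range n, AA x k
      = ∑ k ∈ range n, ∑ i, x i * ((qs x k).eval (x i) * (qs x k).eval (x i) / NN x k) := by
        refine Finset.sum_congr rfl fun k _ => ?_
        unfold AA ip
        rw [Finset.sum_div]
        refine Finset.sum_congr rfl fun i _ => ?_
        simp only [eval_mul, eval_X]
        ring
    _ = ∑ i, x i * ∑ k ∈ range n, (qs x k).eval (x i) * (qs x k).eval (x i) / NN x k := by
        rw [Finset.sum_comm]
        refine Finset.sum_congr rfl fun i _ => ?_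
        rw [Finset.mul_sum]
    _ = ∑ i, x i := by
        refine Finset.sum_congr rfl fun i _ => ?_
        rw [hP x hinj i i, if_pos rfl, mul_one]

lemma hterm (hinj : Function.Injective x) {k : ℕ} (hk : k < n) :
    ip x (X * (X * qs x k)) (qs x k) / NN x k = BB x (k+1) + AA x k ^ 2 + BB x k := by
  have hNk : NN x k ≠ 0 := (Npos x hinj hk).ne'
  have key : ip x (X * (X * qs x k)) (qs x k)
      = NN x (k+1) + AA x k ^ 2 * NN x k + BB x k ^ 2 * NN x (k-1) := by
    rw [ipE3, hX x k, ipE5]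
    have o1 : ip x (qs x (k+1)) (qs x k) = 0 := by
      rw [ip_symm]; exact orth x hinj (k+1) (by omega) k (by omega)
    have o2 : ip x (qs x (k+1)) (qs x (k-1)) = 0 := by
      rw [ip_symm]; exact orth x hinj (k+1) (by omega) (k-1) (by omega)
    have o3 : BB x k * ip x (qs x k) (qs x (k-1)) = 0 := by
      cases Nat.eq_zero_or_pos k with
      | inl h0 => subst h0; simp [BB]
      | inr hpos =>
        rw [ip_symm, orth x hinj k (by omega) (k-1) (by omega), mul_zero]
    rw [o1, o2]
    have hNN1 : ip x (qs x (k+1)) (qs x (k+1)) = NN x (k+1) := rfl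
    have hNN2 : ip x (qs x k) (qs x k) = NN x k := rfl
    have hNN3 : ip x (qs x (k-1)) (qs x (k-1)) = NN x (k-1) := rfl
    rw [hNN1, hNN2, hNN3]
    linear_combination (2 * AA x k) * o3
  rw [key]
  have hB1 : BB x (k+1) = NN x (k+1) / NN x k := by simp [BB]
  have hB2 : BB x k ^ 2 * NN x (k-1) / NN x k = BB x k := by
    cases Nat.eq_zero_or_pos k with
    | inl h0 => subst h0; simp [BB]
    | inr hpos =>
      have hNk1 : NN x (k-1) ≠ 0 := (Npos x hinj (by omega)).ne'
      have hB : BB x k = NN x k / NN x (k-1) := by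
        have : k ≠ 0 := by omega
        simp [BB, this]
      rw [hB]
      field_simp
    -- end
  rw [add_div, add_div, hB1, hB2]
  congr 1
  field_simp

lemma tr_two (hinj : Function.Injective x) (hn : 0 < n) :
    ∑ i, (x i)^2 = (∑ k ∈ range n, AA x k ^ 2) + 2 * ∑ k ∈ range n, BB x k := by
  have step1 : ∑ i, (x i)^2
      = ∑ k ∈ range n, ip x (X * (X * qs x k)) (qs x k) / NN x k := by
    calc ∑ i, (x i)^2
        = ∑ i, (x i)^2 * ∑ k ∈ range n, (qs x k).eval (x i) * (qs x k).eval (x i) / NN x k := by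
          refine Finset.sum_congr rfl fun i _ => ?_
          rw [hP x hinj i i, if_pos rfl, mul_one]
      _ = ∑ k ∈ range n, ∑ i, (x i)^2 * ((qs x k).eval (x i) * (qs x k).eval (x i) / NN x k) := by
          rw [Finset.sum_comm]
          refine Finset.sum_congr rfl fun i _ => ?_
          rw [Finset.mul_sum]
      _ = ∑ k ∈ range n, ip x (X * (X * qs x k)) (qs x k) / NN x k := by
          refine Finset.sum_congr rfl fun k _ => ?_
          unfold ip
          rw [Finset.sum_div]
          refine Finset.sum_congr rfl fun i _ => ?_
          simp only [eval_mul, eval_X]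
          ring
  rw [step1]
  have step2 : ∑ k ∈ range n, ip x (X * (X * qs x k)) (qs x k) / NN x k
      = ∑ k ∈ range n, (BB x (k+1) + AA x k ^ 2 + BB x k) := by
    refine Finset.sum_congr rfl fun k hk => hterm x hinj (mem_range.mp hk)
  rw [step2]
  rw [Finset.sum_add_distrib, Finset.sum_add_distrib]
  have hshift : ∑ k ∈ range n, BB x (k+1) = ∑ k ∈ range n, BB x k := by
    have h1 := Finset.sum_range_succ' (fun k => BB x k) n
    have h2 : ∑ k ∈ range (n+1), BB x k = ∑ k ∈ range n, BB x k + BB x n :=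
      Finset.sum_range_succ _ n
    have hB0 : BB x 0 = 0 := by simp [BB]
    have hBn : BB x n = 0 := by
      have : n ≠ 0 := by omega
      simp [BB, this, NN_top x hinj hn]
    rw [h2, hB0, hBn] at h1
    linarith
  rw [hshift]
  ring


/-- Coefficient matrix (unitriangular). -/
noncomputable def Tm : Matrix (Fin n) (Fin n) ℝ :=
  Matrix.of fun j k => (qs x (k : ℕ)).coeff (j : ℕ)

lemma hVT : Matrix.vandermonde x * Tm x = Mm x := by
  ext i k
  rw [Matrix.mul_apply]
  unfold Tm Mm
  simp only [Matrix.of_apply, Matrix.vandermonde_apply]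
  rw [eval_eq_sum_range' (n := n) (by rw [(qs_monic x _).2]; exact k.isLt) (x i)]
  rw [← Fin.sum_univ_eq_sum_range (fun j => (qs x (k : ℕ)).coeff j * x i ^ j) n]
  exact Finset.sum_congr rfl fun j _ => mul_comm _ _

lemma hTdet : (Tm x).det = 1 := by
  rw [Matrix.det_of_upperTriangular (M := Tm x)]
  · rw [Finset.prod_eq_one]
    intro k _
    unfold Tm
    simp only [Matrix.of_apply]
    have h1 := (qs_monic x (k : ℕ)).1
    have h2 := (qs_monic x (k : ℕ)).2
    have := h1.coeff_natDegree
    rwa [h2] at this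
  · intro i j hij
    unfold Tm
    simp only [Matrix.of_apply]
    apply coeff_eq_zero_of_natDegree_lt
    rw [(qs_monic x _).2]
    exact hij

lemma delta_eq (hinj : Function.Injective x) :
    ∏ i, ∏ j ∈ Ioi i, (x i - x j)^2 = ∏ k ∈ range n, NN x k := by
  have h1 : (Mm x).det ^ 2 = ∏ k : Fin n, NN x (k : ℕ) := by
    have h := congrArg Matrix.det (hMtM x hinj)
    rw [Matrix.det_mul, Matrix.det_transpose, Matrix.det_diagonal] at h
    rw [← h]; ring
  have h2 : (Mm x).det = (Matrix.vandermonde x).det := by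
    rw [← hVT, Matrix.det_mul, hTdet, mul_one]
  calc ∏ i, ∏ j ∈ Ioi i, (x i - x j)^2
      = (∏ i, ∏ j ∈ Ioi i, (x j - x i))^2 := by
        rw [← Finset.prod_pow]
        refine Finset.prod_congr rfl fun i _ => ?_
        rw [← Finset.prod_pow]
        exact Finset.prod_congr rfl fun j _ => by ring
    _ = (Matrix.vandermonde x).det ^ 2 := by rw [Matrix.det_vandermonde]
    _ = ∏ k : Fin n, NN x (k : ℕ) := by rw [← h2, h1]
    _ = ∏ k ∈ range n, NN x k := Fin.prod_univ_eq_prod_range _ n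

lemma NN_eq (hinj : Function.Injective x) :
    ∀ k, k < n → NN x k = n * ∏ j ∈ Icc 1 k, BB x j := by
  intro k
  induction k with
  | zero =>
    intro _
    rw [NN_zero_eq]
    rw [show Icc 1 0 = (∅ : Finset ℕ) from rfl]
    rw [Finset.prod_empty, mul_one]
  | succ m IH =>
    intro hm
    have hNm : NN x m ≠ 0 := (Npos x hinj (by omega)).ne'
    have hBB : NN x (m+1) = BB x (m+1) * NN x m := by
      have : BB x (m+1) = NN x (m+1) / NN x m := by simp [BB]
      rw [this]; field_simp
    rw [hBB, IH (by omega), Finset.prod_Icc_succ_top (by omega)]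
    ring

/-- **Schur's discriminant inequality.** -/
lemma schur_ineq (hn : 2 ≤ n) (hinj : Function.Injective x) :
    (∏ i, ∏ j ∈ Ioi i, (x i - x j)^2) ≤ (hyperfactorial n : ℝ) *
      (((∑ i, (x i)^2) - (∑ i, x i)^2 / n) / 2 / (n.choose 2))^(n.choose 2) := by
  have hn0 : 0 < n := by omega
  have hnR : (0:ℝ) < n := by exact_mod_cast hn0
  have hCpos : 0 < n.choose 2 := Nat.choose_pos hn
  have hCR : (0:ℝ) < (n.choose 2 : ℝ) := by exact_mod_cast hCpos
  have hIco : Ico 1 n = Icc 1 (n-1) := by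
    rw [← Finset.Ico_add_one_right_eq_Icc]
    congr 1
    omega
  -- positivity of the B's
  have hBpos : ∀ j ∈ Icc 1 (n-1), 0 < BB x j := by
    intro j hj
    rw [mem_Icc] at hj
    have hj0 : j ≠ 0 := by omega
    have : BB x j = NN x j / NN x (j-1) := by simp [BB, hj0]
    rw [this]
    exact div_pos (Npos x hinj (by omega)) (Npos x hinj (by omega))
  have hsumBB : ∑ k ∈ range n, BB x k = ∑ j ∈ Icc 1 (n-1), BB x j := by
    rw [range_eq_Ico, Finset.sum_eq_sum_Ico_succ_bot hn0, hIco]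
    simp [BB]
  set Bs := ∑ j ∈ Icc 1 (n-1), BB x j with hBsdef
  have hBs0 : 0 ≤ Bs := Finset.sum_nonneg fun j hj => (hBpos j hj).le
  -- Cauchy-Schwarz on the diagonal coefficients
  have hcs : (∑ k ∈ range n, AA x k)^2 ≤ (n:ℝ) * ∑ k ∈ range n, AA x k ^ 2 := by
    have := sq_sum_le_card_mul_sum_sq (s := range n) (f := AA x)
    simpa using this
  rw [tr_one x hinj] at hcs
  have htr2 := tr_two x hinj hn0
  rw [hsumBB] at htr2
  set s := ((∑ i, (x i)^2) - (∑ i, x i)^2 / n) / 2 with hsdef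
  have hBs_le : Bs ≤ s := by
    have h1 : (∑ i, x i)^2 / n ≤ ∑ k ∈ range n, AA x k ^ 2 := by
      rw [div_le_iff₀ hnR]
      linarith [hcs]
    rw [hsdef]
    linarith [htr2, h1]
  have hs0 : 0 ≤ s := le_trans hBs0 hBs_le
  -- weight bookkeeping
  have hw_sum : ∑ j ∈ Icc 1 (n-1), (n - j) = n.choose 2 := by
    have reflect : ∑ j ∈ Icc 1 (n-1), (n - j) = ∑ j ∈ Icc 1 (n-1), j := by
      refine Finset.sum_nbij' (fun j => n - j) (fun j => n - j) ?_ ?_ ?_ ?_ ?_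
      · intro a ha; simp only [mem_Icc] at ha ⊢; omega
      · intro a ha; simp only [mem_Icc] at ha ⊢; omega
      · intro a ha; simp only [mem_Icc] at ha; show n - (n - a) = a; omega
      · intro a ha; simp only [mem_Icc] at ha; show n - (n - a) = a; omega
      · intro a _; rfl
    have gauss : ∑ j ∈ range n, j = ∑ j ∈ Icc 1 (n-1), j := by
      rw [range_eq_Ico, Finset.sum_eq_sum_Ico_succ_bot hn0, hIco, zero_add]
    have g1 := Finset.sum_range_id_mul_two n
    have g2 : n.choose 2 = n * (n-1) / 2 := Nat.choose_two_right n
    obtain ⟨m, hm⟩ : ∃ m, n * (n-1) = m := ⟨_, rfl⟩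
    rw [hm] at g1 g2
    rw [reflect, ← gauss]
    omega
  have hwR : ∑ j ∈ Icc 1 (n-1), ((n - j : ℕ) : ℝ) / (n.choose 2 : ℝ) = 1 := by
    rw [← Finset.sum_div]
    rw [← Nat.cast_sum]
    rw [hw_sum]
    exact div_self hCR.ne'
  -- AM-GM
  set z : ℕ → ℝ := fun j => (n.choose 2 : ℝ) * BB x j / ((n - j : ℕ) : ℝ) with hzdef
  have hnj : ∀ j ∈ Icc 1 (n-1), ((n - j : ℕ) : ℝ) ≠ 0 := by
    intro j hj; rw [mem_Icc] at hj
    exact Nat.cast_ne_zero.mpr (by omega)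
  have hz : ∀ j ∈ Icc 1 (n-1), 0 ≤ z j := by
    intro j hj
    exact div_nonneg (mul_nonneg hCR.le (hBpos j hj).le) (Nat.cast_nonneg _)
  have hG := Real.geom_mean_le_arith_mean_weighted (Icc 1 (n-1))
    (fun j => ((n - j : ℕ) : ℝ) / (n.choose 2 : ℝ)) z
    (fun j _ => div_nonneg (Nat.cast_nonneg _) hCR.le) hwR hz
  have hwz : ∑ j ∈ Icc 1 (n-1), ((n - j : ℕ) : ℝ) / (n.choose 2 : ℝ) * z j = Bs := by
    rw [hBsdef]
    refine Finset.sum_congr rfl fun j hj => ?_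
    simp only [hzdef]
    have h1 := hnj j hj
    field_simp
  rw [hwz] at hG
  have hGpow : (∏ j ∈ Icc 1 (n-1), z j ^ (((n - j : ℕ) : ℝ) / (n.choose 2 : ℝ)))^(n.choose 2)
      ≤ Bs ^ (n.choose 2) :=
    pow_le_pow_left₀ (Finset.prod_nonneg fun j hj => Real.rpow_nonneg (hz j hj) _) hG _
  have hGL : (∏ j ∈ Icc 1 (n-1), z j ^ (((n - j : ℕ) : ℝ) / (n.choose 2 : ℝ)))^(n.choose 2)
      = ∏ j ∈ Icc 1 (n-1), z j ^ (n - j) := by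
    rw [← Finset.prod_pow]
    refine Finset.prod_congr rfl fun j hj => ?_
    rw [← Real.rpow_natCast (z j ^ (((n - j : ℕ) : ℝ) / (n.choose 2 : ℝ))) (n.choose 2),
      ← Real.rpow_mul (hz j hj)]
    rw [div_mul_cancel₀ _ hCR.ne']
    exact Real.rpow_natCast _ _
  rw [hGL] at hGpow
  -- unpack the product of z's
  have hzexp : ∏ j ∈ Icc 1 (n-1), z j ^ (n - j)
      = (n.choose 2 : ℝ)^(n.choose 2) * (∏ j ∈ Icc 1 (n-1), BB x j ^ (n - j))
        / ∏ j ∈ Icc 1 (n-1), ((n - j : ℕ) : ℝ) ^ (n - j) := by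
    calc ∏ j ∈ Icc 1 (n-1), z j ^ (n - j)
        = ∏ j ∈ Icc 1 (n-1),
            ((n.choose 2 : ℝ)^(n-j) * BB x j^(n-j) / ((n - j : ℕ) : ℝ)^(n-j)) := by
          refine Finset.prod_congr rfl fun j hj => ?_
          simp only [hzdef]
          rw [div_pow, mul_pow]
      _ = (∏ j ∈ Icc 1 (n-1), (n.choose 2 : ℝ)^(n-j)) * (∏ j ∈ Icc 1 (n-1), BB x j^(n-j))
            / ∏ j ∈ Icc 1 (n-1), ((n - j : ℕ) : ℝ)^(n-j) := by
          rw [Finset.prod_div_distrib, Finset.prod_mul_distrib]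
      _ = (n.choose 2 : ℝ)^(n.choose 2) * (∏ j ∈ Icc 1 (n-1), BB x j^(n-j))
            / ∏ j ∈ Icc 1 (n-1), ((n - j : ℕ) : ℝ)^(n-j) := by
          rw [Finset.prod_pow_eq_pow_sum, hw_sum]
  have hD : (0:ℝ) < ∏ j ∈ Icc 1 (n-1), ((n - j : ℕ) : ℝ)^(n-j) := by
    refine Finset.prod_pos fun j hj => ?_
    have := hnj j hj
    positivity
  have hCC : (0:ℝ) < (n.choose 2 : ℝ)^(n.choose 2) := by positivity
  rw [hzexp] at hGpow
  rw [div_le_iff₀ hD] at hGpow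
  -- hGpow : C^C * ∏ B^(n-j) ≤ Bs^C * D
  have hBpow : ∏ j ∈ Icc 1 (n-1), BB x j ^ (n-j)
      ≤ (∏ j ∈ Icc 1 (n-1), ((n - j : ℕ) : ℝ)^(n-j)) * (Bs / (n.choose 2 : ℝ))^(n.choose 2) := by
    rw [div_pow]
    have heq : (∏ j ∈ Icc 1 (n-1), ((n - j : ℕ):ℝ)^(n-j))
          * (Bs^(n.choose 2) / (n.choose 2:ℝ)^(n.choose 2))
        = (Bs^(n.choose 2) * ∏ j ∈ Icc 1 (n-1), ((n - j : ℕ):ℝ)^(n-j))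
          / (n.choose 2:ℝ)^(n.choose 2) := by ring
    rw [heq, le_div_iff₀ hCC, mul_comm]
    exact hGpow
  -- the product over B's of the discriminant
  have hDelta : ∏ i, ∏ j ∈ Ioi i, (x i - x j)^2
      = (n:ℝ)^n * ∏ j ∈ Icc 1 (n-1), BB x j^(n-j) := by
    rw [delta_eq x hinj]
    calc ∏ k ∈ range n, NN x k
        = ∏ k ∈ range n, ((n:ℝ) * ∏ j ∈ Icc 1 k, BB x j) :=
          Finset.prod_congr rfl fun k hk => NN_eq x hinj k (mem_range.mp hk)
      _ = (n:ℝ)^n * ∏ k ∈ range n, ∏ j ∈ Icc 1 k, BB x j := by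
          rw [Finset.prod_mul_distrib, Finset.prod_const, card_range]
      _ = (n:ℝ)^n * ∏ j ∈ Icc 1 (n-1), ∏ _k ∈ Ico j n, BB x j := by
          congr 1
          refine Finset.prod_comm' ?_
          intro k j
          simp only [mem_range, mem_Icc, mem_Ico]
          omega
      _ = (n:ℝ)^n * ∏ j ∈ Icc 1 (n-1), BB x j^(n-j) := by
          congr 1
          refine Finset.prod_congr rfl fun j hj => ?_
          rw [Finset.prod_const, Nat.card_Ico]
  have hDrefl : ∏ j ∈ Icc 1 (n-1), ((n - j : ℕ):ℝ)^(n-j) = ∏ j ∈ Icc 1 (n-1), (j:ℝ)^j := by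
    refine Finset.prod_nbij' (fun j => n - j) (fun j => n - j) ?_ ?_ ?_ ?_ ?_
    · intro a ha; simp only [mem_Icc] at ha ⊢; omega
    · intro a ha; simp only [mem_Icc] at ha ⊢; omega
    · intro a ha; simp only [mem_Icc] at ha; show n - (n - a) = a; omega
    · intro a ha; simp only [mem_Icc] at ha; show n - (n - a) = a; omega
    · intro a _; rfl
  have hYnat : hyperfactorial n = n^n * ∏ j ∈ Icc 1 (n-1), j^j := by
    unfold hyperfactorial
    rw [Finset.prod_range_succ, mul_comm]
    congr 1
    rw [range_eq_Ico, Finset.prod_eq_prod_Ico_succ_bot hn0, hIco]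
    simp
  have hYR : (hyperfactorial n : ℝ) = (n:ℝ)^n * ∏ j ∈ Icc 1 (n-1), (j:ℝ)^j := by
    rw [hYnat]
    push_cast
    ring
  have hmono : (Bs/(n.choose 2 : ℝ))^(n.choose 2) ≤ (s/(n.choose 2 : ℝ))^(n.choose 2) :=
    pow_le_pow_left₀ (by positivity) (by gcongr) _
  rw [hDelta, hYR]
  calc (n:ℝ)^n * ∏ j ∈ Icc 1 (n-1), BB x j^(n-j)
      ≤ (n:ℝ)^n * ((∏ j ∈ Icc 1 (n-1), ((n - j : ℕ) : ℝ)^(n-j))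
          * (Bs / (n.choose 2 : ℝ))^(n.choose 2)) :=
        mul_le_mul_of_nonneg_left hBpow (by positivity)
    _ ≤ (n:ℝ)^n * ((∏ j ∈ Icc 1 (n-1), ((n - j : ℕ) : ℝ)^(n-j))
          * (s / (n.choose 2 : ℝ))^(n.choose 2)) :=
        mul_le_mul_of_nonneg_left (mul_le_mul_of_nonneg_left hmono hD.le) (by positivity)
    _ = (n:ℝ)^n * (∏ j ∈ Icc 1 (n-1), (j:ℝ)^j) * (s / (n.choose 2 : ℝ))^(n.choose 2) := by
        rw [hDrefl]
        ring

end SchurAux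

theorem general_potential_bound (n : ℕ) (hn : 2 ≤ n) (a b c d : ℝ) (ha : 0 < a)
    (S1 S2 : ℝ) (hS1 : 0 < S1) (hS2 : 0 < S2)
    (h1 : ((n : ℝ) - 1) * S2 < S1 ^ 2) (h2 : S1 ^ 2 < n * S2)
    (x : Fin n → ℝ) (hx : ∀ i, 0 < x i)
    (hsum : ∑ i, x i = S1) (hsq : ∑ i, (x i) ^ 2 = S2) :
    a / n * (∑ i, (x i) ^ 2) + b / n ^ 2 * (∑ i, x i) ^ 2 + c / n * (∑ i, x i) + d ≥
      (n.choose 2 : ℝ) * (2 * a / n) *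
          ((∏ i : Fin n, ∏ j ∈ Finset.Ioi i, (x i - x j) ^ 2) / hyperfactorial n)
            ^ ((1 : ℝ) / (n.choose 2))
        + (a + b) * S1 ^ 2 / n ^ 2 + c * S1 / n + d := by
  have hn0 : 0 < n := by omega
  have hnR : (0:ℝ) < n := by exact_mod_cast hn0
  have hCpos : 0 < n.choose 2 := Nat.choose_pos hn
  have hCR : (0:ℝ) < (n.choose 2 : ℝ) := by exact_mod_cast hCpos
  have hYnat : 0 < hyperfactorial n := by
    refine Finset.prod_pos fun k _ => ?_
    cases k with
    | zero => simp
    | succ m => exact pow_pos (Nat.succ_pos m) _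
  have hYpos : (0:ℝ) < (hyperfactorial n : ℝ) := by exact_mod_cast hYnat
  set Δ := ∏ i : Fin n, ∏ j ∈ Finset.Ioi i, (x i - x j) ^ 2 with hΔdef
  have hΔ0 : 0 ≤ Δ :=
    Finset.prod_nonneg fun i _ => Finset.prod_nonneg fun j _ => sq_nonneg _
  have hs : (0:ℝ) < S2 - S1^2 / n := by
    rw [sub_pos, div_lt_iff₀ hnR]
    linarith [h2]
  have key : (n.choose 2 : ℝ) * (2 * a / n) * (Δ / hyperfactorial n) ^ ((1:ℝ)/(n.choose 2))
      ≤ a / n * S2 - a * S1^2 / n^2 := by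
    by_cases hinj : Function.Injective x
    · have hsch := SchurAux.schur_ineq x hn hinj
      rw [← hΔdef] at hsch
      rw [hsum, hsq] at hsch
      set s := (S2 - S1^2 / (n:ℝ)) / 2 / (n.choose 2 : ℝ) with hsdef
      have hs0 : 0 ≤ s := by
        rw [hsdef]
        apply div_nonneg (div_nonneg hs.le (by norm_num)) hCR.le
      have hr1 : Δ / (hyperfactorial n : ℝ) ≤ s ^ (n.choose 2) := by
        rw [div_le_iff₀ hYpos, mul_comm]
        exact hsch
      have hr2 : (Δ / (hyperfactorial n : ℝ)) ^ ((1:ℝ)/(n.choose 2)) ≤ s := by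
        calc (Δ / (hyperfactorial n : ℝ)) ^ ((1:ℝ)/(n.choose 2))
            ≤ (s ^ (n.choose 2)) ^ ((1:ℝ)/(n.choose 2)) :=
              Real.rpow_le_rpow (by positivity) hr1 (by positivity)
          _ = s := by
              rw [← Real.rpow_natCast s (n.choose 2), ← Real.rpow_mul hs0,
                mul_one_div, div_self hCR.ne', Real.rpow_one]
      calc (n.choose 2 : ℝ) * (2 * a / n) * (Δ / hyperfactorial n) ^ ((1:ℝ)/(n.choose 2))
          ≤ (n.choose 2 : ℝ) * (2 * a / n) * s :=
            mul_le_mul_of_nonneg_left hr2 (by positivity)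
        _ = a / n * S2 - a * S1^2 / n^2 := by
            rw [hsdef]
            field_simp
    · have hΔz : Δ = 0 := by
        rw [Function.not_injective_iff] at hinj
        obtain ⟨i, j, hij, hne⟩ := hinj
        rcases lt_or_gt_of_ne hne with h | h
        · refine Finset.prod_eq_zero (Finset.mem_univ i) ?_
          refine Finset.prod_eq_zero (Finset.mem_Ioi.mpr h) ?_
          rw [hij]; ring
        · refine Finset.prod_eq_zero (Finset.mem_univ j) ?_
          refine Finset.prod_eq_zero (Finset.mem_Ioi.mpr h) ?_
          rw [hij]; ring
      rw [hΔz, zero_div, Real.zero_rpow (by positivity), mul_zero]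
      have e : a / n * (S2 - S1^2 / n) = a / n * S2 - a * S1^2 / n^2 := by
        field_simp
      have := mul_pos (div_pos ha hnR) hs
      linarith [e ▸ this]
  rw [ge_iff_le, hsum, hsq]
  have e1 : (a + b) * S1^2 / (n:ℝ)^2 = a * S1^2 / n^2 + b / n^2 * S1^2 := by ring
  have e2 : c * S1 / (n:ℝ) = c / n * S1 := by ring
  linarith [key]
end
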